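/- arXiv:math/0607129 — 4 statements merged into one kernel-verified Lean document; each statement's English description precedes it below -/
import Mathlib

section
/- For each i with σ(i) ≠ i, the map φ ↦ arcsin(-2 + 2(i + σ(i) - 1)/m - sin φ) maps the interval Θ_i^m = [arcsin(-1+2(i-1)/m), arcsin(-1+2i/m)] bijectively onto Θ_{σ(i)}^m, is monotonically decreasing there, and preserves the measure λ with dλ(φ) = cos φ dφ (i.e., the pushforward of the restriction of λ to Θ_i^m equals the restriction of λ to Θ_{σ(i)}^m). -/
/-! The map is the composite `arcsin ∘ (c - ·) ∘ sin` with `c = -2 + 2(i + j - 1)/m`.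
Here `sin` carries `Θ_i^m` onto `[-1 + 2(i-1)/m, -1 + 2i/m]` and pushes `λ` to Lebesgue measure
(the density `cos φ` is its Jacobian), the reflection `x ↦ c - x` carries that interval onto
`[-1 + 2(j-1)/m, -1 + 2j/m]` preserving Lebesgue measure, and `arcsin` undoes the first step on
the `j`-th interval. Each factor is a bijection, monotone except for the decreasing reflection. -/

open Real MeasureTheory Set Filter Topology

noncomputable def lam : Measure ℝ :=
  (volume.restrict (Set.Icc (-(π/2)) (π/2))).withDensity fun φ => ENNReal.ofReal (Real.cos φ)

namespace Real

lemma Icc_arcsin_subset (a b : ℝ) : Icc (arcsin a) (arcsin b) ⊆ Icc (-(π / 2)) (π / 2) :=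
  Icc_subset_Icc (arcsin_mem_Icc a).1 (arcsin_mem_Icc b).2

section

variable {a b : ℝ}

lemma invOn_arcsin_sin_Icc (ha : -1 ≤ a) (hb : b ≤ 1) :
    InvOn arcsin sin (Icc (arcsin a) (arcsin b)) (Icc a b) :=
  ⟨fun _ hx => arcsin_sin' (Icc_arcsin_subset a b hx),
    fun _ hy => sin_arcsin (ha.trans hy.1) (hy.2.trans hb)⟩

lemma bijOn_sin_Icc_arcsin (ha : -1 ≤ a) (hab : a ≤ b) (hb : b ≤ 1) :
    BijOn sin (Icc (arcsin a) (arcsin b)) (Icc a b) := by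
  refine (invOn_arcsin_sin_Icc ha hb).bijOn (fun x hx => ?_)
    fun y hy => ⟨monotone_arcsin hy.1, monotone_arcsin hy.2⟩
  have hx' := Icc_arcsin_subset a b hx
  exact ⟨(arcsin_le_iff_le_sin ⟨ha, hab.trans hb⟩ hx').1 hx.1,
    (le_arcsin_iff_sin_le hx' ⟨ha.trans hab, hb⟩).1 hx.2⟩

lemma bijOn_arcsin_Icc (ha : -1 ≤ a) (hab : a ≤ b) (hb : b ≤ 1) :
    BijOn arcsin (Icc a b) (Icc (arcsin a) (arcsin b)) :=
  (bijOn_sin_Icc_arcsin ha hab hb).symm (invOn_arcsin_sin_Icc ha hb).symm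

lemma lam_restrict_Icc_arcsin :
    lam.restrict (Icc (arcsin a) (arcsin b))
      = (volume.restrict (Icc (arcsin a) (arcsin b))).withDensity
          fun φ => ENNReal.ofReal (cos φ) := by
  rw [lam, restrict_withDensity measurableSet_Icc, Measure.restrict_restrict measurableSet_Icc,
    inter_eq_left.mpr (Icc_arcsin_subset a b)]

lemma measurePreserving_sin_lam_restrict (ha : -1 ≤ a) (hab : a ≤ b) (hb : b ≤ 1) :
    MeasurePreserving sin (lam.restrict (Icc (arcsin a) (arcsin b)))
      (volume.restrict (Icc a b)) := by
  refine ⟨measurable_sin, ?_⟩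
  have hsub := Icc_arcsin_subset a b
  have hchange := map_withDensity_abs_det_fderiv_eq_addHaar volume
    measurableSet_Icc.nullMeasurableSet
    (f' := fun x => ContinuousLinearMap.toSpanSingleton ℝ (cos x))
    (fun x _ => (hasDerivAt_sin x).hasFDerivAt.hasFDerivWithinAt) (injOn_sin.mono hsub)
  rw [(bijOn_sin_Icc_arcsin ha hab hb).image_eq] at hchange
  rw [lam_restrict_Icc_arcsin, ← hchange]
  congr 1
  refine withDensity_congr_ae ?_
  filter_upwards [ae_restrict_mem measurableSet_Icc] with x hx
  rw [ContinuousLinearMap.det_toSpanSingleton, abs_of_nonneg (cos_nonneg_of_mem_Icc (hsub hx))]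

lemma measurePreserving_arcsin_volume_restrict (ha : -1 ≤ a) (hab : a ≤ b) (hb : b ≤ 1) :
    MeasurePreserving arcsin (volume.restrict (Icc a b))
      (lam.restrict (Icc (arcsin a) (arcsin b))) := by
  refine ⟨continuous_arcsin.measurable, ?_⟩
  have hinv : arcsin ∘ sin =ᵐ[lam.restrict (Icc (arcsin a) (arcsin b))] id := by
    filter_upwards [ae_restrict_mem measurableSet_Icc] with x hx
    exact (invOn_arcsin_sin_Icc ha hb).1 hx
  rw [← (measurePreserving_sin_lam_restrict ha hab hb).map_eq,
    Measure.map_map continuous_arcsin.measurable measurable_sin, Measure.map_congr hinv,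
    Measure.map_id]

end

end Real

lemma bijOn_const_sub_Icc (a b c : ℝ) :
    BijOn (fun x => c - x) (Icc a b) (Icc (c - b) (c - a)) := by
  simpa only [image_const_sub_Icc] using
    (sub_right_injective (b := c)).injOn.bijOn_image (s := Icc a b)

lemma measurePreserving_const_sub_volume_restrict (a b c : ℝ) :
    MeasurePreserving (fun x => c - x) (volume.restrict (Icc a b))
      (volume.restrict (Icc (c - b) (c - a))) := by
  simpa only [preimage_const_sub_Icc, sub_sub_cancel] using
    (Measure.measurePreserving_sub_left volume c).restrict_preimage
      (measurableSet_Icc (a := c - b) (b := c - a))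

section Reflection

variable {a b c : ℝ} (ha : -1 ≤ a) (hab : a ≤ b) (hb : b ≤ 1)
  (hcb : -1 ≤ c - b) (hca : c - a ≤ 1)
include ha hab hb hcb hca

lemma bijOn_arcsin_sub_sin :
    BijOn (fun φ => arcsin (c - sin φ)) (Icc (arcsin a) (arcsin b))
      (Icc (arcsin (c - b)) (arcsin (c - a))) :=
  (bijOn_arcsin_Icc hcb (by linarith) hca).comp
    ((bijOn_const_sub_Icc a b c).comp (bijOn_sin_Icc_arcsin ha hab hb))

lemma strictAntiOn_arcsin_sub_sin :
    StrictAntiOn (fun φ => arcsin (c - sin φ)) (Icc (arcsin a) (arcsin b)) := by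
  have hsub : StrictAntiOn (fun φ => c - sin φ) (Icc (arcsin a) (arcsin b)) :=
    StrictAnti.comp_strictMonoOn (g := fun x => c - x) (fun _ _ h => sub_lt_sub_left h c)
      (strictMonoOn_sin.mono (Icc_arcsin_subset a b))
  refine strictMonoOn_arcsin.comp_strictAntiOn hsub ?_
  exact ((bijOn_const_sub_Icc a b c).comp (bijOn_sin_Icc_arcsin ha hab hb)).mapsTo.mono_right
    (Icc_subset_Icc hcb hca)

lemma measurePreserving_arcsin_sub_sin :
    MeasurePreserving (fun φ => arcsin (c - sin φ)) (lam.restrict (Icc (arcsin a) (arcsin b)))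
      (lam.restrict (Icc (arcsin (c - b)) (arcsin (c - a)))) :=
  (measurePreserving_arcsin_volume_restrict hcb (by linarith) hca).comp
    ((measurePreserving_const_sub_volume_restrict a b c).comp
      (measurePreserving_sin_lam_restrict ha hab hb))

end Reflection

lemma partition_point_bounds {m k : ℕ} (hk : 1 ≤ k) (hkm : k ≤ m) :
    -1 ≤ -1 + 2 * ((k : ℝ) - 1) / m ∧
      -1 + 2 * ((k : ℝ) - 1) / m ≤ -1 + 2 * (k : ℝ) / m ∧ -1 + 2 * (k : ℝ) / m ≤ 1 := by
  have hk' : (1 : ℝ) ≤ k := by exact_mod_cast hk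
  have hkm' : (k : ℝ) ≤ m := by exact_mod_cast hkm
  have hm : (0 : ℝ) < m := by linarith
  refine ⟨by have := div_nonneg (by linarith : (0 : ℝ) ≤ 2 * ((k : ℝ) - 1)) hm.le; linarith,
    by gcongr; linarith, ?_⟩
  have : 2 * (k : ℝ) / m ≤ 2 := by rw [div_le_iff₀ hm]; linarith
  linarith

theorem stmt4_general (m i j : ℕ) (hi1 : 1 ≤ i) (him : i ≤ m)
    (hj1 : 1 ≤ j) (hjm : j ≤ m) :
    Set.BijOn (fun φ => Real.arcsin (-2 + 2*((i:ℝ) + j - 1)/m - Real.sin φ))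
      (Set.Icc (Real.arcsin (-1 + 2*((i:ℝ)-1)/m)) (Real.arcsin (-1 + 2*(i:ℝ)/m)))
      (Set.Icc (Real.arcsin (-1 + 2*((j:ℝ)-1)/m)) (Real.arcsin (-1 + 2*(j:ℝ)/m))) ∧
    StrictAntiOn (fun φ => Real.arcsin (-2 + 2*((i:ℝ) + j - 1)/m - Real.sin φ))
      (Set.Icc (Real.arcsin (-1 + 2*((i:ℝ)-1)/m)) (Real.arcsin (-1 + 2*(i:ℝ)/m))) ∧
    Measure.map (fun φ => Real.arcsin (-2 + 2*((i:ℝ) + j - 1)/m - Real.sin φ))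
      (lam.restrict (Set.Icc (Real.arcsin (-1 + 2*((i:ℝ)-1)/m)) (Real.arcsin (-1 + 2*(i:ℝ)/m))))
      = lam.restrict (Set.Icc (Real.arcsin (-1 + 2*((j:ℝ)-1)/m)) (Real.arcsin (-1 + 2*(j:ℝ)/m))) := by
  obtain ⟨ha, hab, hb⟩ := partition_point_bounds (m := m) hi1 him
  obtain ⟨ha', -, hb'⟩ := partition_point_bounds (m := m) hj1 hjm
  have hcb : -2 + 2 * ((i : ℝ) + j - 1) / m - (-1 + 2 * (i : ℝ) / m)
      = -1 + 2 * ((j : ℝ) - 1) / m := by ring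
  have hca : -2 + 2 * ((i : ℝ) + j - 1) / m - (-1 + 2 * ((i : ℝ) - 1) / m)
      = -1 + 2 * (j : ℝ) / m := by ring
  have hlo := hcb.symm ▸ ha'
  have hhi := hca.symm ▸ hb'
  have hbij := bijOn_arcsin_sub_sin ha hab hb hlo hhi
  have hmeas := measurePreserving_arcsin_sub_sin ha hab hb hlo hhi
  rw [hcb, hca] at hbij hmeas
  exact ⟨hbij, strictAntiOn_arcsin_sub_sin ha hab hb hlo hhi, hmeas.map_eq⟩

theorem stmt4 (m i j : ℕ) (hm : 2 ≤ m) (hi1 : 1 ≤ i) (him : i ≤ m)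
    (hj1 : 1 ≤ j) (hjm : j ≤ m) (hij : j ≠ i) :
    Set.BijOn (fun φ => Real.arcsin (-2 + 2*((i:ℝ) + j - 1)/m - Real.sin φ))
      (Set.Icc (Real.arcsin (-1 + 2*((i:ℝ)-1)/m)) (Real.arcsin (-1 + 2*(i:ℝ)/m)))
      (Set.Icc (Real.arcsin (-1 + 2*((j:ℝ)-1)/m)) (Real.arcsin (-1 + 2*(j:ℝ)/m))) ∧
    StrictAntiOn (fun φ => Real.arcsin (-2 + 2*((i:ℝ) + j - 1)/m - Real.sin φ))
      (Set.Icc (Real.arcsin (-1 + 2*((i:ℝ)-1)/m)) (Real.arcsin (-1 + 2*(i:ℝ)/m))) ∧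
    Measure.map (fun φ => Real.arcsin (-2 + 2*((i:ℝ) + j - 1)/m - Real.sin φ))
      (lam.restrict (Set.Icc (Real.arcsin (-1 + 2*((i:ℝ)-1)/m)) (Real.arcsin (-1 + 2*(i:ℝ)/m))))
      = lam.restrict (Set.Icc (Real.arcsin (-1 + 2*((j:ℝ)-1)/m)) (Real.arcsin (-1 + 2*(j:ℝ)/m))) :=
  stmt4_general m i j hi1 him hj1 hjm
end

section
/- Let σ be a permutation of {1, …, m} with σ² = id, and let φ_σ : [-π/2, π/2] → [-π/2, π/2] be the λ-measure-preserving map that sends each Θ_i^m onto Θ_{σ(i)}^m monotonically decreasingly when σ(i) ≠ i and is the identity when σ(i) = i. Then the pushforward measure ν^σ of λ under φ ↦ (φ, φ_σ(φ)) has both coordinate marginals equal to λ and is symmetric under the reflection (φ, φ⁺) ↦ (φ⁺, φ). -/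
/-!
Since `cos` is the derivative of `sin`, the substitution `t = sin φ` carries `lam` to Lebesgue
measure on `[-1, 1]` and the sets `Θ_k` to the intervals of length `2 / m` between consecutive
points of the grid `-1 + 2k/m`. In this coordinate `φ_σ` is, on each interval, either the identity
or the reflection `t ↦ c - t` onto the `σ k`-th interval; both preserve Lebesgue measure and, since
`σ` is an involution, they compose to the identity. So `φ_σ` preserves `lam` and is a `lam`-a.e.
involution, which gives both marginals and the symmetry of the graph measure.
-/

open Real MeasureTheory Set Filter Topology

lemma map_sin_lam : lam.map sin = volume.restrict (Icc (-1) 1) := by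
  rw [← bijOn_sin.image_eq, ← map_withDensity_abs_det_fderiv_eq_addHaar volume
    measurableSet_Icc.nullMeasurableSet (f' := fun x => (1 : ℝ →L[ℝ] ℝ).smulRight (cos x))
    (fun x _ => (hasDerivAt_sin x).hasFDerivAt.hasFDerivWithinAt) injOn_sin]
  refine congrArg _ (withDensity_congr_ae
    (ae_restrict_of_forall_mem measurableSet_Icc fun x hx => ?_))
  beta_reduce
  simp [abs_of_nonneg (cos_nonneg_of_mem_Icc hx)]

lemma map_arcsin_volume_Icc : (volume.restrict (Icc (-1 : ℝ) 1)).map arcsin = lam := by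
  rw [← map_sin_lam, Measure.map_map measurable_arcsin measurable_sin]
  have hmem : ∀ᵐ x ∂lam, x ∈ Icc (-(π / 2)) (π / 2) :=
    (withDensity_absolutelyContinuous _ _).ae_le (ae_restrict_mem measurableSet_Icc)
  refine (Measure.map_congr (hmem.mono fun x hx => arcsin_sin hx.1 hx.2)).trans Measure.map_id

noncomputable def gridPt (m : ℕ) (x : ℝ) : ℝ := -1 + 2 * x / m

/-- Indices start at `0`: `arcsinCell m k` is the paper's `Θ_{k+1}^m`, and `cell m k` is its
image under `sin`. -/
noncomputable def cell (m k : ℕ) : Set ℝ := Ioo (gridPt m k) (gridPt m (k + 1))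

noncomputable def arcsinCell (m k : ℕ) : Set ℝ :=
  Ioo (arcsin (gridPt m k)) (arcsin (gridPt m (k + 1)))

lemma gridPt_monotone (m : ℕ) : Monotone (gridPt m) := fun x y h => by
  unfold gridPt; gcongr

section Grid

variable {m : ℕ}

lemma neg_one_le_gridPt (k : ℕ) : -1 ≤ gridPt m k := by
  unfold gridPt; have : (0 : ℝ) ≤ 2 * k / m := by positivity
  linarith

lemma gridPt_self (hm : m ≠ 0) : gridPt m m = 1 := by
  unfold gridPt; field_simp; ring

lemma gridPt_add_one_le_one (k : Fin m) : gridPt m (k + 1) ≤ 1 :=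
  (gridPt_monotone m (by exact_mod_cast k.isLt)).trans_eq (gridPt_self k.pos.ne')

lemma cell_subset_Icc (k : Fin m) : cell m k ⊆ Icc (-1) 1 :=
  Ioo_subset_Icc_self.trans (Icc_subset_Icc (neg_one_le_gridPt k) (gridPt_add_one_le_one k))

lemma arcsinCell_subset_Icc (k : ℕ) : arcsinCell m k ⊆ Icc (-(π / 2)) (π / 2) :=
  Ioo_subset_Icc_self.trans (Icc_subset_Icc (neg_pi_div_two_le_arcsin _) (arcsin_le_pi_div_two _))

lemma mapsTo_arcsin_cell (k : Fin m) : MapsTo arcsin (cell m k) (arcsinCell m k) :=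
  (strictMonoOn_arcsin.mono
    (Icc_subset_Icc (neg_one_le_gridPt k) (gridPt_add_one_le_one k))).mapsTo_Ioo

lemma mapsTo_sin_arcsinCell (k : Fin m) : MapsTo sin (arcsinCell m k) (cell m k) := by
  have h := (strictMonoOn_sin.mono (Icc_subset_Icc (neg_pi_div_two_le_arcsin (gridPt m k))
    (arcsin_le_pi_div_two (gridPt m (k + 1))))).mapsTo_Ioo
  have hk : gridPt m k ≤ gridPt m (k + 1) := gridPt_monotone m (by linarith)
  rwa [sin_arcsin (neg_one_le_gridPt k) (hk.trans (gridPt_add_one_le_one k)),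
    sin_arcsin ((neg_one_le_gridPt k).trans hk) (gridPt_add_one_le_one k)] at h

lemma pairwise_disjoint_cell : Pairwise (Function.onFun Disjoint fun k : Fin m => cell m k) := by
  refine (pairwise_disjoint_on _).2 fun i j hij => ?_
  have h : gridPt m (i + 1) ≤ gridPt m j := gridPt_monotone m (by exact_mod_cast hij)
  exact (Ioc_disjoint_Ioc_of_le h).mono Ioo_subset_Ioc_self Ioo_subset_Ioc_self

lemma Icc_ae_eq_iUnion_cell (hm : m ≠ 0) : Icc (-1 : ℝ) 1 =ᵐ[volume] ⋃ k : Fin m, cell m k := by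
  have hsub : (⋃ k : Fin m, cell m k) ⊆ Icc (-1) 1 := iUnion_subset cell_subset_Icc
  refine ae_eq_set.2 ⟨measure_mono_null (fun x hx => ?_)
    ((countable_range fun i : ℕ => gridPt m i).measure_zero volume),
    by rw [sdiff_eq_empty.2 hsub, measure_empty]⟩
  obtain ⟨⟨hx0, hx1⟩, hxU⟩ := hx
  rcases hx1.eq_or_lt with rfl | hx1
  · exact ⟨m, gridPt_self hm⟩
  have hx : x ∈ Ico (gridPt m (0 : ℕ)) (gridPt m m) := by
    rw [gridPt_self hm]
    exact ⟨by simpa [gridPt] using hx0, hx1⟩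
  obtain ⟨i, hi, hxi⟩ := mem_iUnion₂.1 (Ico_subset_biUnion_Ico m (fun i : ℕ => gridPt m i) hx)
  by_contra hgrid
  rw [Nat.cast_succ] at hxi
  exact hxU (mem_iUnion.2 ⟨⟨i, Finset.mem_range.1 hi⟩, hxi.1.lt_of_ne fun h => hgrid ⟨i, h⟩, hxi.2⟩)

lemma volume_restrict_Icc_eq_sum_cell (hm : m ≠ 0) :
    volume.restrict (Icc (-1 : ℝ) 1) = Measure.sum fun k : Fin m => volume.restrict (cell m k) :=
  (Measure.restrict_congr_set (Icc_ae_eq_iUnion_cell hm)).trans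
    (Measure.restrict_iUnion pairwise_disjoint_cell fun _ => measurableSet_Ioo)

lemma lam_eq_sum_map_arcsin_cell (hm : m ≠ 0) :
    lam = Measure.sum fun k : Fin m => (volume.restrict (cell m k)).map arcsin := by
  rw [← map_arcsin_volume_Icc, volume_restrict_Icc_eq_sum_cell hm,
    Measure.map_sum measurable_arcsin.aemeasurable]

lemma ae_lam_mem_iUnion_arcsinCell (hm : m ≠ 0) : ∀ᵐ φ ∂lam, φ ∈ ⋃ k : Fin m, arcsinCell m k := by
  have hU : MeasurableSet (⋃ k : Fin m, arcsinCell m k) := .iUnion fun _ => measurableSet_Ioo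
  rw [lam_eq_sum_map_arcsin_cell hm,
    Measure.ae_sum_iff' (p := (· ∈ ⋃ k : Fin m, arcsinCell m k)) hU]
  intro k
  rw [ae_map_iff (p := (· ∈ ⋃ k : Fin m, arcsinCell m k)) measurable_arcsin.aemeasurable hU]
  exact ae_restrict_of_forall_mem measurableSet_Ioo fun t ht =>
    mem_iUnion.2 ⟨k, mapsTo_arcsin_cell k ht⟩

end Grid

section CellMap

variable {m : ℕ} (σ : Equiv.Perm (Fin m))

/-- `sin ∘ φ_σ ∘ arcsin` on `cell m k`: the reflection exchanges the endpoints of `cell m k` with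
those of `cell m (σ k)`. -/
noncomputable def cellMap (k : Fin m) (t : ℝ) : ℝ :=
  if σ k = k then t else gridPt m k + gridPt m ((σ k : ℕ) + 1) - t

lemma preimage_const_sub_cell (i j : ℕ) :
    (fun t => gridPt m i + gridPt m (j + 1) - t) ⁻¹' cell m j = cell m i := by
  rw [cell, preimage_const_sub_Ioo, cell]
  congr 1 <;> unfold gridPt <;> ring

lemma measurePreserving_cellMap (k : Fin m) :
    MeasurePreserving (cellMap σ k) (volume.restrict (cell m k))
      (volume.restrict (cell m (σ k))) := by
  by_cases hk : σ k = k
  · rw [show cellMap σ k = id from funext fun _ => if_pos hk, hk]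
    exact MeasurePreserving.id _
  · have h := (Measure.measurePreserving_sub_left volume
      (gridPt m k + gridPt m ((σ k : ℕ) + 1))).restrict_preimage (s := cell m (σ k))
      measurableSet_Ioo
    rw [preimage_const_sub_cell] at h
    unfold cellMap
    simpa only [if_neg hk] using h

lemma mapsTo_cellMap (k : Fin m) : MapsTo (cellMap σ k) (cell m k) (cell m (σ k)) := by
  by_cases hk : σ k = k
  · rw [show cellMap σ k = id from funext fun _ => if_pos hk, hk]
    exact mapsTo_id _
  · intro t ht
    rw [← preimage_const_sub_cell k (σ k)] at ht
    simpa [cellMap, hk] using ht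

lemma cellMap_cellMap {σ : Equiv.Perm (Fin m)} (hσ : Function.Involutive σ) (k : Fin m) (t : ℝ) :
    cellMap σ (σ k) (cellMap σ k t) = t := by
  by_cases hk : σ k = k
  · simp [cellMap, hk]
  · have hk' : σ (σ k) ≠ σ k := by rwa [hσ k, ne_comm]
    simp only [cellMap, if_neg hk, if_neg hk']
    rw [hσ k]
    unfold gridPt
    ring

end CellMap

section FoldMap

variable {m : ℕ} {σ : Equiv.Perm (Fin m)} {f : ℝ → ℝ}

lemma map_lam_of_eqOn_cellMap (hm : m ≠ 0) (hfm : Measurable f)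
    (hf : ∀ k, EqOn f (arcsin ∘ cellMap σ k ∘ sin) (arcsinCell m k)) : lam.map f = lam := by
  have piece (k : Fin m) : ((volume.restrict (cell m k)).map arcsin).map f
      = (volume.restrict (cell m (σ k))).map arcsin := by
    have hpk := measurePreserving_cellMap σ k
    have : f ∘ arcsin =ᵐ[volume.restrict (cell m k)] arcsin ∘ cellMap σ k :=
      ae_restrict_of_forall_mem measurableSet_Ioo fun t ht => by
        have h := cell_subset_Icc k ht
        simp [hf k (mapsTo_arcsin_cell k ht), sin_arcsin h.1 h.2]
    rw [Measure.map_map hfm measurable_arcsin, Measure.map_congr this,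
      ← Measure.map_map measurable_arcsin hpk.measurable, hpk.map_eq]
  rw [lam_eq_sum_map_arcsin_cell hm, Measure.map_sum hfm.aemeasurable]
  simp_rw [piece]
  exact Measure.sum_comp_equiv σ fun k => (volume.restrict (cell m k)).map arcsin

lemma ae_lam_apply_apply_of_eqOn_cellMap (hm : m ≠ 0) (hσ : Function.Involutive σ)
    (hf : ∀ k, EqOn f (arcsin ∘ cellMap σ k ∘ sin) (arcsinCell m k)) :
    ∀ᵐ φ ∂lam, f (f φ) = φ := by
  filter_upwards [ae_lam_mem_iUnion_arcsinCell hm] with φ hφ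
  obtain ⟨k, hk⟩ := mem_iUnion.1 hφ
  have hc := mapsTo_cellMap σ k (mapsTo_sin_arcsinCell k hk)
  have h1 : f φ = arcsin (cellMap σ k (sin φ)) := hf k hk
  have h2 : f φ ∈ arcsinCell m (σ k) := h1 ▸ mapsTo_arcsin_cell (σ k) hc
  have hφI := arcsinCell_subset_Icc k hk
  have hcI := cell_subset_Icc (σ k) hc
  rw [hf (σ k) h2]
  simp only [Function.comp_apply, h1, sin_arcsin hcI.1 hcI.2, cellMap_cellMap hσ,
    arcsin_sin hφI.1 hφI.2]

end FoldMap

lemma map_swap_map_graph {α : Type*} [MeasurableSpace α] {μ : Measure α} {f : α → α}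
    (hf : Measurable f) (hμ : μ.map f = μ) (hff : ∀ᵐ x ∂μ, f (f x) = x) :
    (μ.map fun x => (x, f x)).map Prod.swap = μ.map fun x => (x, f x) := by
  rw [Measure.map_map measurable_swap (measurable_id'.prodMk hf)]
  conv_rhs => rw [← hμ, Measure.map_map (measurable_id'.prodMk hf) hf]
  exact Measure.map_congr (hff.mono fun x hx => by simp [hx])

theorem stmt5 (m : ℕ) (hm : 0 < m) (σ : Equiv.Perm (Fin m)) (hσ : ∀ k, σ (σ k) = k)
    (φσ : ℝ → ℝ) (hmeas : Measurable φσ)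
    (hid : ∀ k : Fin m, σ k = k →
      ∀ φ ∈ Set.Ioo (Real.arcsin (-1 + 2*((k:ℕ):ℝ)/m)) (Real.arcsin (-1 + 2*(((k:ℕ):ℝ)+1)/m)),
        φσ φ = φ)
    (hne : ∀ k : Fin m, σ k ≠ k →
      ∀ φ ∈ Set.Ioo (Real.arcsin (-1 + 2*((k:ℕ):ℝ)/m)) (Real.arcsin (-1 + 2*(((k:ℕ):ℝ)+1)/m)),
        φσ φ = Real.arcsin (-2 + 2*(((k:ℕ):ℝ) + ((σ k : Fin m):ℕ) + 1)/m - Real.sin φ)) :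
    (Measure.map (fun φ => (φ, φσ φ)) lam).map Prod.fst = lam ∧
    (Measure.map (fun φ => (φ, φσ φ)) lam).map Prod.snd = lam ∧
    (Measure.map (fun φ => (φ, φσ φ)) lam).map Prod.swap
      = Measure.map (fun φ => (φ, φσ φ)) lam := by
  have hf (k : Fin m) : EqOn φσ (arcsin ∘ cellMap σ k ∘ sin) (arcsinCell m k) := by
    intro φ hφ
    by_cases hk : σ k = k
    · have hφI := arcsinCell_subset_Icc k hφ
      simp [cellMap, hk, hid k hk φ hφ, arcsin_sin hφI.1 hφI.2]
    · simp only [hne k hk φ hφ, Function.comp_apply, cellMap, if_neg hk, gridPt]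
      ring_nf
  have hmap := map_lam_of_eqOn_cellMap hm.ne' hmeas hf
  exact ⟨(Measure.fst_map_prodMk hmeas).trans Measure.map_id',
    (Measure.snd_map_prodMk measurable_id).trans hmap,
    map_swap_map_graph hmeas hmap (ae_lam_apply_apply_of_eqOn_cellMap hm.ne' hσ hf)⟩
end

section
/- Let A = (a_{ij}) be an m × m symmetric matrix with nonnegative integer entries and set n_i = Σ_{j=1}^m a_{ij}. Then there exist matrices B_{ij} of size n_i × n_j, for 1 ≤ i, j ≤ m, such that B_{ij}ᵀ = B_{ji}, the sum of all entries of B_{ij} equals a_{ij}, and the block matrix B = (B_{ij}) (of size Σn_i × Σn_i) is a permutation matrix: each row and each column contains exactly one entry equal to 1 and all other entries are 0. -/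
theorem stmt7 (m : ℕ) (A : Fin m → Fin m → ℕ) (hsym : ∀ i j, A i j = A j i) :
    ∃ e : Equiv.Perm (Σ i : Fin m, Fin (∑ j, A i j)),
      (∀ p, e (e p) = p) ∧
      ∀ i j, (Finset.univ.filter
        (fun p : Σ i : Fin m, Fin (∑ j, A i j) => p.1 = i ∧ (e p).1 = j)).card = A i j := by
  have F : ∀ i : Fin m, (Σ j : Fin m, Fin (A i j)) ≃ Fin (∑ j, A i j) :=
    fun i => Fintype.equivFinOfCardEq (by simp)
  let E : (Σ i : Fin m, Fin (∑ j, A i j)) ≃ (Σ i : Fin m, Σ j : Fin m, Fin (A i j)) :=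
    Equiv.sigmaCongrRight (fun i => (F i).symm)
  let sw : (Σ i : Fin m, Σ j : Fin m, Fin (A i j)) ≃ (Σ i : Fin m, Σ j : Fin m, Fin (A i j)) :=
    { toFun := fun q => ⟨q.2.1, q.1, Fin.cast (hsym _ _) q.2.2⟩
      invFun := fun q => ⟨q.2.1, q.1, Fin.cast (hsym _ _) q.2.2⟩
      left_inv := by rintro ⟨i, j, k⟩; simp
      right_inv := by rintro ⟨i, j, k⟩; simp }
  set e := E.trans (sw.trans E.symm) with he
  have key : ∀ (i j : Fin m) (b : Fin (A i j)),
      e ⟨i, F i ⟨j, b⟩⟩ = ⟨j, F j ⟨i, Fin.cast (hsym i j) b⟩⟩ := by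
    intro i j b
    simp only [he, Equiv.trans_apply]
    have hE : E ⟨i, F i ⟨j, b⟩⟩ = ⟨i, ⟨j, b⟩⟩ := by
      show (⟨i, (F i).symm (F i ⟨j, b⟩)⟩ : Σ i : Fin m, Σ j : Fin m, Fin (A i j)) = _
      simp
    rw [hE]
    rfl
  refine ⟨e, ?_, ?_⟩
  · intro p
    simp only [he, Equiv.trans_apply, Equiv.apply_symm_apply]
    have : sw (sw (E p)) = E p := by
      obtain ⟨i, j, k⟩ := E p
      simp [sw]
    rw [this, Equiv.symm_apply_apply]
  · intro i j
    symm
    rw [← Finset.card_fin (A i j)]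
    apply Finset.card_bij (fun b _ => (⟨i, F i ⟨j, b⟩⟩ : Σ i : Fin m, Fin (∑ j, A i j)))
    · intro b _
      simp only [Finset.mem_filter, Finset.mem_univ, true_and]
      rw [key]
    · intro b _ b' _ h
      injection h with h1 h2
      have h3 := (F i).injective h2
      simpa using h3
    · intro p hp
      simp only [Finset.mem_filter, Finset.mem_univ, true_and] at hp
      obtain ⟨i', x⟩ := p
      obtain ⟨h1, h2⟩ := hp
      cases h1
      rcases h3 : (F i').symm x with ⟨j', b⟩
      have hx : x = F i' ⟨j', b⟩ := by rw [← h3]; simp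
      rw [hx, key] at h2
      cases h2
      exact ⟨b, Finset.mem_univ _, by rw [hx]⟩
end

section
/- For any triangle inscribed in a circle of unit radius, its perimeter is at most 3√3, the perimeter of an inscribed equilateral triangle. -/
open scoped RealInnerProductSpace


theorem stmt13 (O A B C : EuclideanSpace ℝ (Fin 2))
    (hA : dist A O = 1) (hB : dist B O = 1) (hC : dist C O = 1) :
    dist A B + dist B C + dist C A ≤ 3 * Real.sqrt 3 := by
  rw [dist_eq_norm] at hA hB hC
  set a := A - O with ha
  set b := B - O with hb
  set c := C - O with hc
  have hab : dist A B = ‖a - b‖ := by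
    rw [dist_eq_norm, ha, hb, sub_sub_sub_cancel_right]
  have hbc : dist B C = ‖b - c‖ := by
    rw [dist_eq_norm, hb, hc, sub_sub_sub_cancel_right]
  have hca : dist C A = ‖c - a‖ := by
    rw [dist_eq_norm, hc, ha, sub_sub_sub_cancel_right]
  have e1 : ‖a - b‖ ^ 2 = 2 - 2 * ⟪a, b⟫ := by
    rw [@norm_sub_sq_real, hA, hB]; ring
  have e2 : ‖b - c‖ ^ 2 = 2 - 2 * ⟪b, c⟫ := by
    rw [@norm_sub_sq_real, hB, hC]; ring
  have e3 : ‖c - a‖ ^ 2 = 2 - 2 * ⟪c, a⟫ := by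
    rw [@norm_sub_sq_real, hC, hA]; ring
  have hsum : (0:ℝ) ≤ 3 + 2 * (⟪a, b⟫ + ⟪b, c⟫ + ⟪c, a⟫) := by
    have h : ‖a + b + c‖ ^ 2 = 3 + 2 * (⟪a, b⟫ + ⟪b, c⟫ + ⟪c, a⟫) := by
      rw [norm_add_sq_real (a+b) c, norm_add_sq_real a b, hA, hB, hC,
        inner_add_left, real_inner_comm c a]
      ring
    rw [← h]; positivity
  have hP2 : (‖a - b‖ + ‖b - c‖ + ‖c - a‖) ^ 2 ≤ 27 := by
    nlinarith [sq_nonneg (‖a - b‖ - ‖b - c‖), sq_nonneg (‖b - c‖ - ‖c - a‖),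
      sq_nonneg (‖a - b‖ - ‖c - a‖), norm_nonneg (a - b), norm_nonneg (b - c),
      norm_nonneg (c - a)]
  have h27 : (3 * Real.sqrt 3) ^ 2 = 27 := by
    rw [mul_pow, Real.sq_sqrt] <;> norm_num
  rw [hab, hbc, hca]
  nlinarith [Real.sqrt_nonneg 3, norm_nonneg (a - b), norm_nonneg (b - c),
    norm_nonneg (c - a), Real.sqrt_pos.mpr (by norm_num : (0:ℝ) < 3)]
end
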